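/- Let σ:ℝ→ℝ be continuous with Lip(σ)<∞, let τ>0, K∈ℕ, and let α_i,γ_i∈ℝ^N, β_i∈ℝ^{N×N} for i=1,…,K. Define ḡ(x):=Σ_{i=1}^K α_i⊙𝛔(β_i x+γ_i) and the τ-periodic piecewise-constant-in-time field g(x,t):=K·α_i⊙𝛔(β_i x+γ_i) for (i−1)τ/K<t≤iτ/K (extended τ-periodically in t), and g_m(x,t):=g(x,mt) for m∈ℕ. Then for each ξ∈ℝ^N the flows satisfy S_{g_m}(t)ξ → S_{ḡ}(t)ξ uniformly on [0,τ] as m→∞. -/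

import Mathlib

/-!
Averaging for fast periodic forcing. If `f(z, t)` is `τ`-periodic in `t`, Lipschitz in `z`
uniformly in `t`, with period average `f̄`, then on each interval `[a, a + τ/ω]` the integral of
`f(y(s), ωs) - f̄(y(s))` along a continuous curve `y` is `O(τ/ω · osc y)`, since for the frozen
state `y(a)` it vanishes exactly. Summing over the `≈ ωt/τ` such intervals, plus one incomplete
interval of length `< τ/ω`, shows that `∫₀ᵗ (f(y, ωs) - f̄(y))` tends to `0` uniformly in `t`.
Along the averaged solution this is the defect of the fast equation, and Grönwall's inequality
turns it into uniform convergence of the solutions. The piecewise-constant neuron field is such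
an `f`: it is `K αᵢ ⊙ 𝛔(βᵢ x + γᵢ)` on the `i`-th subinterval of the period, hence Lipschitz,
measurable in time, and its period average is `∑ᵢ αᵢ ⊙ 𝛔(βᵢ x + γᵢ)`.
-/

open MeasureTheory Set intervalIntegral Bornology Filter
open scoped ENNReal NNReal

noncomputable section

/-- `x` is a solution on `[0,T]` of the ODE `x' = f(x,t)` with initial value `ξ`,
in integral form: `x(t) = ξ + ∫₀ᵗ f(x(s),s) ds`, `x ∈ C⁰([0,T];ℝᴺ)`. -/
def IsSol {N : ℕ} (f : EuclideanSpace ℝ (Fin N) → ℝ → EuclideanSpace ℝ (Fin N)) (T : ℝ)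
    (ξ : EuclideanSpace ℝ (Fin N)) (x : ℝ → EuclideanSpace ℝ (Fin N)) : Prop :=
  ContinuousOn x (Set.Icc 0 T) ∧
    ∀ t ∈ Set.Icc (0 : ℝ) T, x t = ξ + ∫ s in (0 : ℝ)..t, f (x s) s

/-- Hadamard (componentwise) product of two vectors. -/
def had {N : ℕ} (a b : EuclideanSpace ℝ (Fin N)) : EuclideanSpace ℝ (Fin N) :=
  WithLp.toLp 2 (fun i => a i * b i)

/-- Componentwise application of a scalar function `σ : ℝ → ℝ` to a vector. -/
def vecσ {N : ℕ} (σ : ℝ → ℝ) (x : EuclideanSpace ℝ (Fin N)) : EuclideanSpace ℝ (Fin N) :=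
  WithLp.toLp 2 (fun i => σ (x i))

/-- Action of an `N × N` matrix on a vector: `(A x)ᵢ = ∑ⱼ Aᵢⱼ xⱼ`. -/
def mvec {N : ℕ} (A : Matrix (Fin N) (Fin N) ℝ) (x : EuclideanSpace ℝ (Fin N)) :
    EuclideanSpace ℝ (Fin N) :=
  WithLp.toLp 2 (fun i => ∑ j, A i j * x j)


open Function

theorem le_mul_exp_of_le_add_mul_integral {u : ℝ → ℝ} {T a b : ℝ} (hb : 0 ≤ b)
    (hu : ContinuousOn u (Icc 0 T)) (h : ∀ t ∈ Icc 0 T, u t ≤ a + b * ∫ s in 0..t, u s) :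
    ∀ t ∈ Icc 0 T, u t ≤ a * Real.exp (b * t) := by
  intro t ht
  have hT : 0 ≤ T := ht.1.trans ht.2
  set w := IccExtend hT ((Icc 0 T).domRestrict u)
  have hw : Continuous w := continuous_IccExtend_iff.2 hu.domRestrict
  have hwu : ∀ s ∈ Icc 0 T, w s = u s := fun s hs => IccExtend_of_mem hT _ hs
  set v := fun t => a + b * ∫ s in 0..t, w s
  have hv : ∀ t, HasDerivAt v (b * w t) t := fun t =>
    ((hw.integral_hasStrictDerivAt 0 t).hasDerivAt.const_mul b).const_add a
  have hle : ∀ s ∈ Icc 0 T, u s ≤ v s := by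
    intro s hs
    have hint : ∫ r in 0..s, w r = ∫ r in 0..s, u r := integral_congr fun r hr =>
      hwu r (uIcc_subset_Icc ⟨le_rfl, hT⟩ hs hr)
    simpa only [v, hint] using h s hs
  have hgr := le_gronwallBound_of_liminf_deriv_right_le (f' := fun t => b * w t) (δ := a) (K := b)
    (ε := 0)
    (fun x _ => (hv x).continuousAt.continuousWithinAt)
    (fun x _ _ hr => (hv x).hasDerivWithinAt.liminf_right_slope_le hr)
    (by simp [v]) (fun x hx => by
      rw [hwu x (Ico_subset_Icc_self hx), add_zero]
      exact mul_le_mul_of_nonneg_left (hle x (Ico_subset_Icc_self hx)) hb) t ht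
  rw [gronwallBound_ε0, sub_zero] at hgr
  exact (hle t ht).trans hgr

section Chunks

variable {E : Type*} [NormedAddCommGroup E] [NormedSpace ℝ E]

theorem norm_integral_le_of_norm_integral_chunk_le {φ : ℝ → E} {p t η M : ℝ} (hp : 0 < p)
    (ht : 0 ≤ t) (hη : 0 ≤ η) (hM : 0 ≤ M) (hφ : IntervalIntegrable φ volume 0 t)
    (hchunk : ∀ a, 0 ≤ a → a + p ≤ t → ‖∫ s in a..a + p, φ s‖ ≤ η * p)
    (hbound : ∀ s ∈ Ioc 0 t, ‖φ s‖ ≤ M) :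
    ‖∫ s in 0..t, φ s‖ ≤ η * t + M * p := by
  set n := ⌊t / p⌋₊
  have hn : n * p ≤ t := (le_div_iff₀ hp).1 (Nat.floor_le (div_nonneg ht hp.le))
  have hn' : t < (n + 1) * p := (div_lt_iff₀ hp).1 (Nat.lt_floor_add_one _)
  have hsub : ∀ {c d}, 0 ≤ c → d ≤ t → c ≤ d → IntervalIntegrable φ volume c d :=
    fun hc hd hcd => hφ.mono_set (by
      rw [uIcc_of_le hcd, uIcc_of_le ht]; exact Icc_subset_Icc hc hd)
  have hkp : ∀ k ≤ n, (k : ℝ) * p ≤ t := fun k hk =>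
    le_trans (mul_le_mul_of_nonneg_right (by exact_mod_cast hk) hp.le) hn
  have hsum : ∑ k ∈ Finset.range n, ∫ s in k * p..(k + 1 : ℕ) * p, φ s
      = ∫ s in 0..n * p, φ s := by
    simpa using sum_integral_adjacent_intervals (a := fun k : ℕ => k * p) (μ := volume)
      fun k hk => hsub (by positivity) (hkp _ hk) (by gcongr; simp)
  have hchunks : ‖∫ s in 0..n * p, φ s‖ ≤ η * t :=
    calc ‖∫ s in 0..n * p, φ s‖ ≤ ∑ k ∈ Finset.range n, ‖∫ s in k * p..(k + 1 : ℕ) * p, φ s‖ := by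
          rw [← hsum]; exact norm_sum_le _ _
      _ ≤ ∑ _k ∈ Finset.range n, η * p := Finset.sum_le_sum fun k hk => by
          have := hchunk (k * p) (by positivity) (by
            simpa [add_mul] using hkp (k + 1) (Finset.mem_range.1 hk))
          simpa [add_mul] using this
      _ = η * (n * p) := by
          rw [Finset.sum_const, Finset.card_range, nsmul_eq_mul]; ring
      _ ≤ η * t := mul_le_mul_of_nonneg_left hn hη
  have htail : ‖∫ s in n * p..t, φ s‖ ≤ M * p :=
    calc ‖∫ s in n * p..t, φ s‖ ≤ M * |t - n * p| := norm_integral_le_of_norm_le_const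
          fun s hs => by
            rw [uIoc_of_le hn] at hs
            exact hbound s ⟨lt_of_le_of_lt (by positivity) hs.1, hs.2⟩
      _ ≤ M * p := by
          rw [abs_of_nonneg (sub_nonneg.2 hn)]
          exact mul_le_mul_of_nonneg_left (by linarith) hM
  rw [← integral_add_adjacent_intervals (hsub le_rfl hn (by positivity))
    (hsub (by positivity) le_rfl hn)]
  exact (norm_add_le _ _).trans (add_le_add hchunks htail)

theorem Function.Periodic.intervalIntegral_comp_mul {φ : ℝ → E} {τ ω : ℝ} (hφ : Periodic φ τ)
    (hω : ω ≠ 0) (a : ℝ) :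
    ∫ s in a..a + τ / ω, φ (ω * s) = ω⁻¹ • ∫ s in 0..τ, φ s := by
  rw [integral_comp_mul_left _ hω, mul_add, mul_div_cancel₀ _ hω,
    hφ.intervalIntegral_add_eq _ 0, zero_add]

end Chunks

section Averaging

variable {E : Type*} [NormedAddCommGroup E]

structure IsPeriodicLipschitzField (f : E → ℝ → E) (τ : ℝ) (L : ℝ≥0) : Prop where
  stronglyMeasurable : ∀ z, StronglyMeasurable (f z)
  lipschitzWith : ∀ t, LipschitzWith L (f · t)
  bounded_zero : ∃ B, ∀ t, ‖f 0 t‖ ≤ B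
  periodic : ∀ z, Periodic (f z) τ

namespace IsPeriodicLipschitzField

variable {f : E → ℝ → E} {fbar : E → E} {τ : ℝ} {L : ℝ≥0}

theorem exists_norm_le (hf : IsPeriodicLipschitzField f τ L) :
    ∃ B, ∀ z t, ‖f z t‖ ≤ B + L * ‖z‖ := by
  obtain ⟨B, hB⟩ := hf.bounded_zero
  refine ⟨B, fun z t => ?_⟩
  have hz := (hf.lipschitzWith t).dist_le_mul z 0
  rw [dist_eq_norm, dist_eq_norm, sub_zero] at hz
  linarith [norm_sub_norm_le (f z t) (f 0 t), hB t]

theorem of_index {h : ℕ → E → E} {C : ℕ → ℝ≥0} {s : Finset ℕ} {idx : ℝ → ℕ} (hidx : Measurable idx)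
    (hmem : ∀ t, idx t ∈ s) (hh : ∀ i, LipschitzWith (C i) (h i))
    (hf : ∀ z t, f z t = h (idx t) z) (hper : ∀ z, Periodic (f z) τ) :
    IsPeriodicLipschitzField f τ (s.sup C) where
  stronglyMeasurable z := by
    rw [show f z = (fun i => h i z) ∘ idx from funext (hf z)]
    exact StronglyMeasurable.of_discrete.comp_measurable hidx
  lipschitzWith t := by
    simpa only [hf] using (hh (idx t)).weaken (Finset.le_sup (hmem t))
  bounded_zero := ⟨∑ i ∈ s, ‖h i 0‖, fun t => by
    rw [hf]; exact Finset.single_le_sum (f := fun i => ‖h i 0‖) (fun _ _ => norm_nonneg _) (hmem t)⟩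
  periodic := hper

variable [MeasurableSpace E] [BorelSpace E] [SecondCountableTopology E]

theorem integrableOn_comp (hf : IsPeriodicLipschitzField f τ L) {y : ℝ → E} {a b : ℝ}
    (hy : ContinuousOn y (Icc a b)) (ω : ℝ) :
    IntegrableOn (fun s => f (y s) (ω * s)) (Icc a b) := by
  obtain ⟨B, hB⟩ := hf.exists_norm_le
  obtain ⟨C, hC⟩ := isCompact_Icc.exists_bound_of_continuousOn hy
  have hmeas : StronglyMeasurable (uncurry f) :=
    stronglyMeasurable_uncurry_of_continuous_of_stronglyMeasurable
      (fun t => (hf.lipschitzWith t).continuous) hf.stronglyMeasurable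
  refine IntegrableOn.of_bound measure_Icc_lt_top (hmeas.aestronglyMeasurable.comp_aemeasurable
    ((hy.aemeasurable measurableSet_Icc).prodMk (measurable_const_mul ω).aemeasurable))
    (B + L * C) ?_
  filter_upwards [ae_restrict_mem measurableSet_Icc] with s hs
  exact (hB _ _).trans (by gcongr; exact hC s hs)

theorem intervalIntegrable_comp (hf : IsPeriodicLipschitzField f τ L) {y : ℝ → E} {a b : ℝ}
    (hy : ContinuousOn y (uIcc a b)) (ω : ℝ) :
    IntervalIntegrable (fun s => f (y s) (ω * s)) volume a b :=
  (hf.integrableOn_comp hy ω).intervalIntegrable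

variable [NormedSpace ℝ E]

theorem lipschitzWith_average (hf : IsPeriodicLipschitzField f τ L) (hτ : 0 < τ)
    (havg : ∀ z, ∫ t in 0..τ, f z t = τ • fbar z) : LipschitzWith L fbar := by
  have hint : ∀ z, IntervalIntegrable (f z) volume 0 τ := fun z => by
    simpa using hf.intervalIntegrable_comp (y := fun _ => z) continuousOn_const 1
  refine LipschitzWith.of_dist_le_mul fun z w => le_of_mul_le_mul_left ?_ hτ
  calc τ * dist (fbar z) (fbar w) = ‖∫ t in 0..τ, (f z t - f w t)‖ := by
        rw [integral_sub (hint z) (hint w), havg, havg, ← smul_sub, norm_smul,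
          Real.norm_of_nonneg hτ.le, dist_eq_norm]
    _ ≤ L * dist z w * |τ - 0| := norm_integral_le_of_norm_le_const fun t _ => by
        rw [← dist_eq_norm]; exact (hf.lipschitzWith t).dist_le_mul z w
    _ = τ * (L * dist z w) := by rw [sub_zero, abs_of_pos hτ, mul_comm]

theorem norm_sub_le_of_integral_sub_average_le (hf : IsPeriodicLipschitzField f τ L)
    (hfbar : Continuous fbar) {T ω ε : ℝ} {ξ : E} {x xbar : ℝ → E}
    (hx : ContinuousOn x (Icc 0 T))
    (hx_eq : ∀ t ∈ Icc 0 T, x t = ξ + ∫ s in 0..t, f (x s) (ω * s))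
    (hxbar : ContinuousOn xbar (Icc 0 T))
    (hxbar_eq : ∀ t ∈ Icc 0 T, xbar t = ξ + ∫ s in 0..t, fbar (xbar s))
    (hε : ∀ t ∈ Icc 0 T, ‖∫ s in 0..t, (f (xbar s) (ω * s) - fbar (xbar s))‖ ≤ ε) :
    ∀ t ∈ Icc 0 T, ‖x t - xbar t‖ ≤ ε * Real.exp (L * t) := by
  refine le_mul_exp_of_le_add_mul_integral L.coe_nonneg (hx.sub hxbar).norm fun t ht => ?_
  have hsub : uIcc 0 t ⊆ Icc 0 T := by rw [uIcc_of_le ht.1]; exact Icc_subset_Icc_right ht.2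
  have hfx := hf.intervalIntegrable_comp (hx.mono hsub) ω
  have hfxbar := hf.intervalIntegrable_comp (hxbar.mono hsub) ω
  have hfbarxbar : IntervalIntegrable (fun s => fbar (xbar s)) volume 0 t :=
    (hfbar.comp_continuousOn (hxbar.mono hsub)).intervalIntegrable
  have hu : IntervalIntegrable (fun s => ‖x s - xbar s‖) volume 0 t :=
    ((hx.mono hsub).sub (hxbar.mono hsub)).norm.intervalIntegrable
  have hsplit : x t - xbar t = (∫ s in 0..t, (f (x s) (ω * s) - f (xbar s) (ω * s)))
      + ∫ s in 0..t, (f (xbar s) (ω * s) - fbar (xbar s)) := by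
    rw [integral_sub hfx hfxbar, integral_sub hfxbar hfbarxbar, hx_eq t ht, hxbar_eq t ht]
    abel
  have hlip : ‖∫ s in 0..t, (f (x s) (ω * s) - f (xbar s) (ω * s))‖
      ≤ L * ∫ s in 0..t, ‖x s - xbar s‖ := by
    rw [← intervalIntegral.integral_const_mul]
    refine norm_integral_le_of_norm_le ht.1 (Eventually.of_forall fun s _ => ?_)
      (hu.const_mul _)
    rw [← dist_eq_norm, ← dist_eq_norm]
    exact (hf.lipschitzWith _).dist_le_mul _ _
  rw [hsplit]
  linarith [norm_add_le (∫ s in 0..t, (f (x s) (ω * s) - f (xbar s) (ω * s)))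
    (∫ s in 0..t, (f (xbar s) (ω * s) - fbar (xbar s))), hε t ht]

variable [CompleteSpace E]

theorem norm_integral_sub_average_le (hf : IsPeriodicLipschitzField f τ L) (hτ : 0 < τ)
    (havg : ∀ z, ∫ t in 0..τ, f z t = τ • fbar z) {y : ℝ → E} {ω a r : ℝ} (hω : 0 < ω)
    (hy : ContinuousOn y (Icc a (a + τ / ω)))
    (hr : ∀ s ∈ Icc a (a + τ / ω), dist (y s) (y a) ≤ r) :
    ‖∫ s in a..a + τ / ω, (f (y s) (ω * s) - fbar (y s))‖ ≤ 2 * L * r * (τ / ω) := by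
  have hp : a ≤ a + τ / ω := le_add_of_nonneg_right (by positivity)
  have hlip := hf.lipschitzWith_average hτ havg
  rw [← uIcc_of_le hp] at hy hr
  have hfy := hf.intervalIntegrable_comp hy ω
  have hfa := hf.intervalIntegrable_comp (y := fun _ => y a) continuousOn_const ω
      (a := a) (b := a + τ / ω)
  have hfbar : IntervalIntegrable (fun s => fbar (y s)) volume a (a + τ / ω) :=
    (hlip.continuous.comp_continuousOn hy).intervalIntegrable
  have hfrozen : ∫ s in a..a + τ / ω, (f (y a) (ω * s) - fbar (y a)) = 0 := by
    rw [integral_sub hfa intervalIntegrable_const, (hf.periodic _).intervalIntegral_comp_mul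
      hω.ne', havg, intervalIntegral.integral_const, add_sub_cancel_left, smul_smul, sub_eq_zero,
      inv_mul_eq_div]
  calc ‖∫ s in a..a + τ / ω, (f (y s) (ω * s) - fbar (y s))‖
      = ‖∫ s in a..a + τ / ω, ((f (y s) (ω * s) - fbar (y s))
          - (f (y a) (ω * s) - fbar (y a)))‖ := by
        rw [integral_sub (hfy.sub hfbar) (hfa.sub intervalIntegrable_const), hfrozen, sub_zero]
    _ ≤ 2 * L * r * |a + τ / ω - a| := norm_integral_le_of_norm_le_const fun s hs => by
        have hs' := hr s (uIoc_subset_uIcc hs)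
        calc _ = ‖(f (y s) (ω * s) - f (y a) (ω * s)) - (fbar (y s) - fbar (y a))‖ := by
              congr 1; abel
          _ ≤ L * dist (y s) (y a) + L * dist (y s) (y a) := by
              refine (norm_sub_le _ _).trans (add_le_add ?_ ?_) <;> rw [← dist_eq_norm]
              exacts [(hf.lipschitzWith _).dist_le_mul _ _, hlip.dist_le_mul _ _]
          _ ≤ 2 * L * r := by nlinarith [L.coe_nonneg]
    _ = 2 * L * r * (τ / ω) := by rw [add_sub_cancel_left, abs_of_pos (by positivity)]

theorem norm_integral_sub_average_le_of_uniformContinuous (hf : IsPeriodicLipschitzField f τ L)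
    (hτ : 0 < τ) (havg : ∀ z, ∫ t in 0..τ, f z t = τ • fbar z) {y : ℝ → E} {T ω r δ M : ℝ}
    (hy : ContinuousOn y (Icc 0 T)) (hr : 0 ≤ r)
    (hδ : ∀ s ∈ Icc 0 T, ∀ s' ∈ Icc 0 T, dist s s' < δ → dist (y s) (y s') < r)
    (hω : 0 < ω) (hωδ : τ / ω < δ) (hM : 0 ≤ M)
    (hbound : ∀ s ∈ Icc 0 T, ‖f (y s) (ω * s) - fbar (y s)‖ ≤ M) {t : ℝ} (ht : t ∈ Icc 0 T) :
    ‖∫ s in 0..t, (f (y s) (ω * s) - fbar (y s))‖ ≤ 2 * L * r * t + M * (τ / ω) := by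
  have hsub : Icc 0 t ⊆ Icc 0 T := Icc_subset_Icc_right ht.2
  have hint : IntervalIntegrable (fun s => f (y s) (ω * s) - fbar (y s)) volume 0 t := by
    rw [← uIcc_of_le ht.1] at hsub
    exact (hf.intervalIntegrable_comp (hy.mono hsub) ω).sub
      ((hf.lipschitzWith_average hτ havg).continuous.comp_continuousOn
        (hy.mono hsub)).intervalIntegrable
  refine norm_integral_le_of_norm_integral_chunk_le (by positivity) ht.1 (by positivity) hM hint
    (fun a ha hat => hf.norm_integral_sub_average_le hτ havg hω
      (hy.mono (Icc_subset_Icc ha (hat.trans ht.2))) fun s hs => ?_)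
    fun s hs => hbound s (hsub (Ioc_subset_Icc_self hs))
  have hsa : dist s a < δ := by
    rw [Real.dist_eq, abs_of_nonneg (by linarith [hs.1])]; linarith [hs.2]
  exact (hδ s (hsub ⟨ha.trans hs.1, hs.2.trans hat⟩) a
    (hsub ⟨ha, by linarith [hs.1, hs.2]⟩) hsa).le

theorem eventually_norm_integral_sub_average_le (hf : IsPeriodicLipschitzField f τ L)
    (hτ : 0 < τ) (havg : ∀ z, ∫ t in 0..τ, f z t = τ • fbar z) {y : ℝ → E} {T : ℝ}
    (hy : ContinuousOn y (Icc 0 T)) {ε : ℝ} (hε : 0 < ε) :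
    ∀ᶠ ω in atTop, ∀ t ∈ Icc 0 T, ‖∫ s in 0..t, (f (y s) (ω * s) - fbar (y s))‖ ≤ ε := by
  obtain ⟨M, hM0, hM⟩ : ∃ M, 0 ≤ M ∧
      ∀ ω, ∀ s ∈ Icc 0 T, ‖f (y s) (ω * s) - fbar (y s)‖ ≤ M := by
    obtain ⟨B, hB⟩ := hf.exists_norm_le
    obtain ⟨C, hC⟩ := isCompact_Icc.exists_bound_of_continuousOn hy
    obtain ⟨D, hD⟩ := isCompact_Icc.exists_bound_of_continuousOn
      ((hf.lipschitzWith_average hτ havg).continuous.comp_continuousOn hy)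
    refine ⟨max 0 (B + L * C + D), le_max_left _ _, fun ω s hs => ?_⟩
    have hfy : ‖f (y s) (ω * s)‖ ≤ B + L * C := (hB _ _).trans (by gcongr; exact hC s hs)
    exact (norm_sub_le _ _).trans ((add_le_add hfy (hD s hs)).trans (le_max_right _ _))
  obtain ⟨r, hr0, hrT⟩ : ∃ r > 0, 2 * L * r * T ≤ ε / 2 := by
    refine ⟨ε / (4 * (L * |T| + 1)), by positivity, ?_⟩
    have hLT : L * T ≤ L * |T| + 1 := by nlinarith [le_abs_self T, L.coe_nonneg]
    calc 2 * L * (ε / (4 * (L * |T| + 1))) * T = ε / 2 * (L * T / (L * |T| + 1)) := by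
          field_simp; ring
      _ ≤ ε / 2 * 1 := by gcongr; exact div_le_one_of_le₀ hLT (by positivity)
      _ = ε / 2 := mul_one _
  obtain ⟨δ, hδ0, hδ⟩ := Metric.uniformContinuousOn_iff.1
    (isCompact_Icc.uniformContinuousOn_of_continuous hy) r hr0
  filter_upwards [eventually_gt_atTop 0, eventually_gt_atTop (τ / δ),
    eventually_gt_atTop (2 * M * τ / ε)] with ω hω hωδ hωM t ht
  have hpδ : τ / ω < δ := (div_lt_iff₀ hω).2 (by rwa [div_lt_iff₀ hδ0, mul_comm] at hωδ)
  calc ‖∫ s in 0..t, (f (y s) (ω * s) - fbar (y s))‖ ≤ 2 * L * r * t + M * (τ / ω) :=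
        hf.norm_integral_sub_average_le_of_uniformContinuous hτ havg hy hr0.le hδ hω hpδ hM0
          (hM ω) ht
    _ ≤ ε / 2 + ε / 2 := by
        gcongr
        · exact le_trans (by gcongr; exact ht.2) hrT
        · rw [div_lt_iff₀ hε] at hωM
          rw [← mul_div_assoc, div_le_iff₀ hω]; linarith
    _ = ε := add_halves ε

theorem tendstoUniformlyOn_of_average (hf : IsPeriodicLipschitzField f τ L) (hτ : 0 < τ)
    (havg : ∀ z, ∫ t in 0..τ, f z t = τ • fbar z) {ι : Type*} {l : Filter ι} {ω : ι → ℝ}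
    (hω : Tendsto ω l atTop) {T : ℝ} {ξ : E} {x : ι → ℝ → E} {xbar : ℝ → E}
    (hx : ∀ i, ContinuousOn (x i) (Icc 0 T))
    (hx_eq : ∀ i, ∀ t ∈ Icc 0 T, x i t = ξ + ∫ s in 0..t, f (x i s) (ω i * s))
    (hxbar : ContinuousOn xbar (Icc 0 T))
    (hxbar_eq : ∀ t ∈ Icc 0 T, xbar t = ξ + ∫ s in 0..t, fbar (xbar s)) :
    TendstoUniformlyOn x xbar l (Icc 0 T) := by
  rw [Metric.tendstoUniformlyOn_iff]
  intro ε hε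
  filter_upwards [hω.eventually (hf.eventually_norm_integral_sub_average_le hτ havg hxbar
    (ε := ε / (2 * Real.exp (L * T))) (by positivity))] with i hi t ht
  rw [dist_comm, dist_eq_norm]
  calc ‖x i t - xbar t‖ ≤ ε / (2 * Real.exp (L * T)) * Real.exp (L * t) :=
        hf.norm_sub_le_of_integral_sub_average_le (hf.lipschitzWith_average hτ havg).continuous
          (hx i) (hx_eq i) hxbar hxbar_eq hi t ht
    _ ≤ ε / (2 * Real.exp (L * T)) * Real.exp (L * T) := by gcongr; exact ht.2
    _ = ε / 2 := by field_simp
    _ < ε := half_lt_self hε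

end IsPeriodicLipschitzField

end Averaging

theorem natCeil_mem_piece {τ s : ℝ} (hτ : 0 < τ) {K : ℕ} (hK : 0 < K) (hs : s ∈ Ioc 0 τ) :
    ⌈K * s / τ⌉₊ ∈ Finset.Icc 1 K ∧
      ((⌈K * s / τ⌉₊ : ℝ) - 1) * τ / K < s ∧ s ≤ ⌈K * s / τ⌉₊ * τ / K := by
  have hK' : (0 : ℝ) < K := Nat.cast_pos.2 hK
  have hpos : 0 < K * s / τ := by have := hs.1; positivity
  have hle : K * s / τ ≤ K := by
    rw [div_le_iff₀ hτ]; exact mul_le_mul_of_nonneg_left hs.2 hK'.le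
  have hlt := Nat.ceil_lt_add_one hpos.le
  have hge := Nat.le_ceil (K * s / τ)
  refine ⟨Finset.mem_Icc.2 ⟨Nat.ceil_pos.2 hpos, Nat.ceil_le.2 hle⟩, ?_, ?_⟩
  · rw [div_lt_iff₀ hK', ← lt_div_iff₀ hτ, mul_comm s]; linarith
  · rw [le_div_iff₀ hK', mul_comm s, ← div_le_iff₀ hτ]; exact hge

theorem exists_measurable_index_of_piecewise {X Y : Type*} {g : X → ℝ → Y} {h : ℕ → X → Y}
    {τ : ℝ} (hτ : 0 < τ) {K : ℕ} (hK : 0 < K) (hper : ∀ z, Periodic (g z) τ)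
    (hpiece : ∀ z i, 1 ≤ i → i ≤ K → ∀ t : ℝ,
      ((i : ℝ) - 1) * τ / K < t → t ≤ (i : ℝ) * τ / K → g z t = h i z) :
    ∃ idx : ℝ → ℕ, Measurable idx ∧ (∀ t, idx t ∈ Finset.Icc 1 K) ∧
      ∀ z t, g z t = h (idx t) z := by
  have hmod : Measurable (toIocMod hτ 0) := by
    rw [show toIocMod hτ 0 = fun t => t + ⌊(τ - t) / τ⌋ * τ by
      funext t; simp [toIocMod, toIocDiv_eq_neg_floor]]
    fun_prop
  have hred : ∀ t, toIocMod hτ 0 t ∈ Ioc 0 τ := fun t => by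
    simpa using toIocMod_mem_Ioc hτ 0 t
  refine ⟨fun t => ⌈K * toIocMod hτ 0 t / τ⌉₊,
    Nat.measurable_ceil.comp ((hmod.const_mul _).div_const _),
    fun t => (natCeil_mem_piece hτ hK (hred t)).1, fun z t => ?_⟩
  obtain ⟨hi, hlo, hhi⟩ := natCeil_mem_piece hτ hK (hred t)
  rw [Finset.mem_Icc] at hi
  calc g z t = g z (toIocMod hτ 0 t + toIocDiv hτ 0 t • τ) := by
        rw [toIocMod_add_toIocDiv_zsmul]
    _ = g z (toIocMod hτ 0 t) := ((hper z).zsmul _) _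
    _ = _ := hpiece z _ hi.1 hi.2 _ hlo hhi

theorem intervalIntegral_eq_sum_of_piecewise {E : Type*} [NormedAddCommGroup E]
    [NormedSpace ℝ E] [CompleteSpace E] {φ : ℝ → E} {c : ℕ → E} {τ : ℝ} (hτ : 0 ≤ τ) {K : ℕ}
    (hK : 0 < K) (hpiece : ∀ i, 1 ≤ i → i ≤ K → ∀ t : ℝ,
      ((i : ℝ) - 1) * τ / K < t → t ≤ (i : ℝ) * τ / K → φ t = c i) :
    ∫ t in 0..τ, φ t = (τ / K) • ∑ i ∈ Finset.Icc 1 K, c i := by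
  have hK' : (0 : ℝ) < K := Nat.cast_pos.2 hK
  set a : ℕ → ℝ := fun k => k * τ / K
  have hmono : ∀ k, a k ≤ a (k + 1) := fun k => by
    simp only [a]; gcongr; simp
  have heq : ∀ k < K, EqOn φ (fun _ => c (k + 1)) (uIoc (a k) (a (k + 1))) := fun k hk t ht => by
    rw [uIoc_of_le (hmono k)] at ht
    exact hpiece (k + 1) (by omega) hk _ (by push_cast; simpa [a] using ht.1)
      (by simpa [a] using ht.2)
  have hsum := sum_integral_adjacent_intervals (μ := volume) fun k hk =>
    (intervalIntegrable_congr (heq k hk)).2 intervalIntegrable_const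
  rw [show a 0 = 0 by simp [a], show a K = τ by simp [a, hK'.ne']] at hsum
  rw [← hsum]
  calc ∑ k ∈ Finset.range K, ∫ t in a k..a (k + 1), φ t
      = ∑ k ∈ Finset.range K, (τ / K) • c (k + 1) := Finset.sum_congr rfl fun k hk => by
        rw [integral_congr_ae (Eventually.of_forall fun t ht => heq k (Finset.mem_range.1 hk) ht),
          intervalIntegral.integral_const]
        congr 1
        simp only [a]; push_cast; ring
    _ = (τ / K) • ∑ i ∈ Finset.Icc 1 K, c i := by
        rw [Finset.smul_sum, Finset.range_eq_Ico, Finset.sum_Ico_add' (fun i => (τ / K) • c i),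
          zero_add, Finset.Ico_add_one_right_eq_Icc]

theorem lipschitzWith_vecσ {N : ℕ} {σ : ℝ → ℝ} {K : ℝ≥0} (hσ : LipschitzWith K σ) :
    LipschitzWith K (vecσ (N := N) σ) := by
  refine LipschitzWith.of_dist_le_mul fun u v => ?_
  simp only [EuclideanSpace.dist_eq, vecσ]
  rw [← Real.sqrt_sq K.coe_nonneg, ← Real.sqrt_mul (sq_nonneg _), Finset.mul_sum]
  refine Real.sqrt_le_sqrt (Finset.sum_le_sum fun i _ => ?_)
  rw [← mul_pow]
  exact pow_le_pow_left₀ dist_nonneg (hσ.dist_le_mul _ _) 2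

theorem mvec_eq_toEuclideanCLM {N : ℕ} (A : Matrix (Fin N) (Fin N) ℝ) :
    mvec A = Matrix.toEuclideanCLM (𝕜 := ℝ) A := rfl

theorem had_eq_mvec_diagonal {N : ℕ} (a : EuclideanSpace ℝ (Fin N)) :
    had a = mvec (Matrix.diagonal fun i => a i) := by
  funext x; ext i; simp [had, mvec, Matrix.diagonal_apply]

theorem exists_lipschitzWith_neuron {N : ℕ} {σ : ℝ → ℝ} {Kσ : ℝ≥0} (hσ : LipschitzWith Kσ σ)
    (a c : EuclideanSpace ℝ (Fin N)) (A : Matrix (Fin N) (Fin N) ℝ) :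
    ∃ C, LipschitzWith C fun z => had a (vecσ σ (mvec A z + c)) := by
  simp only [had_eq_mvec_diagonal, mvec_eq_toEuclideanCLM]
  exact ⟨_, (ContinuousLinearMap.lipschitz _).comp ((lipschitzWith_vecσ hσ).comp
    ((isometry_add_right c).lipschitz.comp (ContinuousLinearMap.lipschitz _)))⟩

theorem averaging_piecewise_neuron_general {N : ℕ}
    (σ : ℝ → ℝ) (Kσ : ℝ≥0) (hσl : LipschitzWith Kσ σ)
    (τ : ℝ) (hτ : 0 < τ) (K : ℕ) (hK : 0 < K)
    (α γ : ℕ → EuclideanSpace ℝ (Fin N)) (β : ℕ → Matrix (Fin N) (Fin N) ℝ)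
    (g : EuclideanSpace ℝ (Fin N) → ℝ → EuclideanSpace ℝ (Fin N))
    (hgper : ∀ z : EuclideanSpace ℝ (Fin N), ∀ t : ℝ, g z (t + τ) = g z t)
    (hgdef : ∀ z : EuclideanSpace ℝ (Fin N), ∀ i : ℕ, 1 ≤ i → i ≤ K → ∀ t : ℝ,
      ((i : ℝ) - 1) * τ / K < t → t ≤ (i : ℝ) * τ / K →
      g z t = (K : ℝ) • had (α i) (vecσ σ (mvec (β i) z + γ i)))
    (ξ : EuclideanSpace ℝ (Fin N))
    (xm : ℕ → ℝ → EuclideanSpace ℝ (Fin N))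
    (hxm : ∀ m : ℕ, IsSol (fun z t => g z (m * t)) τ ξ (xm m))
    (xb : ℝ → EuclideanSpace ℝ (Fin N))
    (hxb : IsSol
      (fun z _t => ∑ i ∈ Finset.Icc 1 K, had (α i) (vecσ σ (mvec (β i) z + γ i)))
      τ ξ xb) :
    TendstoUniformlyOn (fun m t => xm m t) xb atTop (Set.Icc 0 τ) := by
  obtain ⟨idx, hidx, hidx_mem, hg⟩ := exists_measurable_index_of_piecewise hτ hK hgper hgdef
  choose C hC using fun i => exists_lipschitzWith_neuron hσl (α i) (γ i) (β i)
  have hf := IsPeriodicLipschitzField.of_index hidx hidx_mem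
    (fun i => (lipschitzWith_smul (K : ℝ)).comp (hC i)) hg hgper
  have havg : ∀ z, ∫ t in 0..τ, g z t
      = τ • ∑ i ∈ Finset.Icc 1 K, had (α i) (vecσ σ (mvec (β i) z + γ i)) := fun z => by
    rw [intervalIntegral_eq_sum_of_piecewise hτ.le hK (hgdef z), ← Finset.smul_sum, smul_smul,
      div_mul_cancel₀ _ (Nat.cast_pos.2 hK).ne']
  exact hf.tendstoUniformlyOn_of_average hτ havg tendsto_natCast_atTop_atTop
    (fun m => (hxm m).1) (fun m => (hxm m).2) hxb.1 hxb.2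

/-- Averaging for the piecewise-constant single-neuron field.
Let `ḡ(x) = ∑_{i=1}^K αᵢ ⊙ 𝛔(βᵢ x + γᵢ)` and let `g` be the `τ`-periodic field with
`g(x,t) = K·αᵢ ⊙ 𝛔(βᵢ x + γᵢ)` for `t ∈ ((i−1)τ/K, iτ/K]` (`i = 1,…,K`), extended
`τ`-periodically. With `g_m(x,t) = g(x,mt)`, for each `ξ ∈ ℝᴺ` the solutions
`S_{g_m}(·)ξ` converge to `S_{ḡ}(·)ξ` uniformly on `[0,τ]` as `m → ∞`. -/
theorem averaging_piecewise_neuron {N : ℕ}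
    (σ : ℝ → ℝ) (hσc : Continuous σ) (Kσ : ℝ≥0) (hσl : LipschitzWith Kσ σ)
    (τ : ℝ) (hτ : 0 < τ) (K : ℕ) (hK : 0 < K)
    (α γ : ℕ → EuclideanSpace ℝ (Fin N)) (β : ℕ → Matrix (Fin N) (Fin N) ℝ)
    (g : EuclideanSpace ℝ (Fin N) → ℝ → EuclideanSpace ℝ (Fin N))
    (hgper : ∀ z : EuclideanSpace ℝ (Fin N), ∀ t : ℝ, g z (t + τ) = g z t)
    (hgdef : ∀ z : EuclideanSpace ℝ (Fin N), ∀ i : ℕ, 1 ≤ i → i ≤ K → ∀ t : ℝ,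
      ((i : ℝ) - 1) * τ / K < t → t ≤ (i : ℝ) * τ / K →
      g z t = (K : ℝ) • had (α i) (vecσ σ (mvec (β i) z + γ i)))
    (ξ : EuclideanSpace ℝ (Fin N))
    (xm : ℕ → ℝ → EuclideanSpace ℝ (Fin N))
    (hxm : ∀ m : ℕ, IsSol (fun z t => g z (m * t)) τ ξ (xm m))
    (xb : ℝ → EuclideanSpace ℝ (Fin N))
    (hxb : IsSol
      (fun z _t => ∑ i ∈ Finset.Icc 1 K, had (α i) (vecσ σ (mvec (β i) z + γ i)))
      τ ξ xb) :
    TendstoUniformlyOn (fun m t => xm m t) xb atTop (Set.Icc 0 τ) :=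
  averaging_piecewise_neuron_general σ Kσ hσl τ hτ K hK α γ β g hgper hgdef ξ xm hxm xb hxb
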